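/- arXiv:2106.14326 — 6 statements merged into one kernel-verified Lean document; each statement's English description precedes it below -/
import Mathlib

section
/- In the rock–paper–scissors game, if both players run CFR (regret matching with simultaneous updates) starting from identical imbalanced initial strategies x₁ = y₁, then x_t = y_t for all t and the sequence of iterates {x_t} does not converge (CFR with this initialization produces a diverging sequence). -/
open Finset Filter Topology

noncomputable section

def dotp3 (a b : Fin 3 → ℝ) : ℝ := ∑ i, a i * b i

/-- The rock-paper-scissors payoff matrix. -/
def RPS : Matrix (Fin 3) (Fin 3) ℝ := !![0, -1, 1; 1, 0, -1; -1, 1, 0]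

/-- The probability simplex over three actions. -/
def simplex3 : Set (Fin 3 → ℝ) := {x | (∀ i, 0 ≤ x i) ∧ (∑ i, x i) = 1}

/-- A distribution is imbalanced if some permutation `λ` of the coordinates satisfies
`x_{λ(1)} ≥ x_{λ(2)} ≥ 0 = x_{λ(3)}`. -/
def Imbalanced (x : Fin 3 → ℝ) : Prop :=
  ∃ lam : Equiv.Perm (Fin 3), x (lam 0) ≥ x (lam 1) ∧ x (lam 1) ≥ 0 ∧ x (lam 2) = 0

/-- Instantaneous regret of player x at time `t`:
`reg_{t,j} = ⟨x_t, G y_t⟩ − (G y_t)_j`. -/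
def regX (x y : ℕ → Fin 3 → ℝ) (t : ℕ) (j : Fin 3) : ℝ :=
  dotp3 (x t) (RPS.mulVec (y t)) - RPS.mulVec (y t) j

/-- Instantaneous regret of player y at time `t` (loss vector `−Gᵀ x_t`). -/
def regY (x y : ℕ → Fin 3 → ℝ) (t : ℕ) (j : Fin 3) : ℝ :=
  dotp3 (y t) (-(RPS.transpose.mulVec (x t))) - (-(RPS.transpose.mulVec (x t))) j

/-- Cumulative regret of player x: `Reg_0 = 0`, `Reg_t = Reg_{t-1} + reg_t`. -/
def RegX (x y : ℕ → Fin 3 → ℝ) (t : ℕ) (j : Fin 3) : ℝ :=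
  ∑ s ∈ Finset.Icc 1 t, regX x y s j

/-- Cumulative regret of player y. -/
def RegY (x y : ℕ → Fin 3 → ℝ) (t : ℕ) (j : Fin 3) : ℝ :=
  ∑ s ∈ Finset.Icc 1 t, regY x y s j

/-- Both players run CFR (regret matching with simultaneous updates): strategies lie
in the simplex, and whenever the positive cumulative regrets have positive total mass,
the next strategy is their normalization (otherwise play is arbitrary). -/
def IsCFR (x y : ℕ → Fin 3 → ℝ) : Prop :=
  (∀ t : ℕ, 1 ≤ t → x t ∈ simplex3 ∧ y t ∈ simplex3) ∧
  (∀ t : ℕ, 1 ≤ t → (0 < ∑ k, max (RegX x y t k) 0) →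
    ∀ j, x (t + 1) j = max (RegX x y t j) 0 / ∑ k, max (RegX x y t k) 0) ∧
  (∀ t : ℕ, 1 ≤ t → (0 < ∑ k, max (RegY x y t k) 0) →
    ∀ j, y (t + 1) j = max (RegY x y t j) 0 / ∑ k, max (RegY x y t k) 0)

/-!
Since `G` is skew-symmetric, CFR from `x₁ = y₁` stays symmetric, and with `p = x_t` the regret
of action `j` is `p_{j+1} - p_{j+2}`. Were the cumulative regrets all nonpositive at some time,
they would sum to zero and so vanish; at `t = 1` this forces `x₁` uniform, contradicting the zero
coordinate, and later it makes `x_t` a fixed point of regret matching against the reversed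
regrets, which is impossible on the simplex. So CFR never stalls.

If `x_t → L`, then `Reg_t / t → r := (L_{j+1} - L_{j+2})_j` by Cesàro. As `Reg_t` sums to zero,
every `x_{t+1}` has a zero coordinate and hence so does `L`, so `r ≠ 0` and regret matching is
continuous at `r`. Being scale invariant, it gives `L = regretMatching r`: `L` would be a fixed
point of regret matching against `r`, again impossible on the simplex.
-/

section RegretMatching

variable {ι : Type*} [Fintype ι]

def regretMatching (R : ι → ℝ) : ι → ℝ := fun j => max (R j) 0 / ∑ k, max (R k) 0

lemma sum_max_pos_of_sum_eq_zero {R : ι → ℝ} (hsum : ∑ k, R k = 0) (hR : R ≠ 0) :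
    0 < ∑ k, max (R k) 0 := by
  by_contra hnonpos
  have hle : ∀ k ∈ univ, R k ≤ 0 := fun k _ =>
    max_le_iff.1 ((single_le_sum (fun k _ => le_max_right (R k) 0) (mem_univ k)).trans
      (not_lt.1 hnonpos)) |>.1
  exact hR (funext fun k => (sum_eq_zero_iff_of_nonpos hle).1 hsum k (mem_univ k))

lemma regretMatching_smul {c : ℝ} (hc : 0 < c) (R : ι → ℝ) :
    regretMatching (c • R) = regretMatching R := by
  have hmax : ∀ k, max (c * R k) 0 = c * max (R k) 0 := fun k => by
    rw [mul_max_of_nonneg _ _ hc.le, mul_zero]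
  funext j
  simp only [regretMatching, Pi.smul_apply, smul_eq_mul, hmax, ← mul_sum]
  exact mul_div_mul_left _ _ hc.ne'

lemma regretMatching_eq_zero_of_nonpos {R : ι → ℝ} {j : ι} (hj : R j ≤ 0) :
    regretMatching R j = 0 := by
  simp [regretMatching, max_eq_right hj]

lemma pos_of_regretMatching_pos {R : ι → ℝ} {j : ι} (hj : 0 < regretMatching R j) :
    0 < R j := by
  by_contra! hle
  exact hj.ne' (regretMatching_eq_zero_of_nonpos hle)

lemma continuousAt_regretMatching {R : ι → ℝ} (hR : ∑ k, max (R k) 0 ≠ 0) :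
    ContinuousAt regretMatching R :=
  continuousAt_pi.2 fun j => ContinuousAt.div
    ((continuous_apply j).max continuous_const).continuousAt
    (continuous_finsetSum _ fun k _ => (continuous_apply k).max continuous_const).continuousAt hR

end RegretMatching

lemma isClosed_simplex3 : IsClosed simplex3 := by
  simp only [simplex3, Set.ofPred_and, Set.ofPred_forall]
  exact (isClosed_iInter fun i => isClosed_le continuous_const (continuous_apply i)).inter
    (isClosed_eq (continuous_finsetSum _ fun i _ => continuous_apply i) continuous_const)

lemma ne_zero_of_mem_simplex3 {p : Fin 3 → ℝ} (hp : p ∈ simplex3) : p ≠ 0 := by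
  rintro rfl
  simp [simplex3] at hp

lemma eq_zero_of_pos_imp_shift_lt {L : Fin 3 → ℝ} (hL : ∀ i, 0 ≤ L i) (d : Fin 3)
    (h : ∀ j, 0 < L j → L (j + d) < L (j + d + d)) : L = 0 := by
  -- a positive coordinate would start the cycle `L j < L (j + d) < L (j + 2d) < L (j + 3d) = L j`
  by_contra hne
  obtain ⟨j, hj⟩ : ∃ j, 0 < L j := by
    by_contra! hnonpos
    exact hne (funext fun i => le_antisymm (hnonpos i) (hL i))
  have hcycle : ∀ j d : Fin 3, j + d + d + d = j := by decide
  have h1 := h j hj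
  have h2 := h (j + d + d) (by linarith [hL (j + d)])
  have h3 := h (j + d) (by rw [hcycle] at h2; linarith)
  rw [hcycle] at h2 h3
  linarith

/-- The regret vector `-(G p)` of either player when both play `p`. -/
def rpsRegret (p : Fin 3 → ℝ) : Fin 3 → ℝ := fun j => p (j + 1) - p (j + 2)

lemma continuous_rpsRegret : Continuous rpsRegret := by
  unfold rpsRegret
  fun_prop

lemma sum_rpsRegret (p : Fin 3 → ℝ) : ∑ j, rpsRegret p j = 0 := by
  simp only [rpsRegret, Fin.sum_univ_three, Fin.reduceAdd]
  ring

lemma rpsRegret_ne_zero {p : Fin 3 → ℝ} (hp : p ∈ simplex3) {k : Fin 3} (hk : p k = 0) :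
    rpsRegret p ≠ 0 := by
  intro h
  have h0 := congrFun h 0
  have h1 := congrFun h 1
  have h2 := congrFun h 2
  have hsum := hp.2
  simp only [rpsRegret, Fin.reduceAdd, Pi.zero_apply, Fin.sum_univ_three] at h0 h1 h2 hsum
  fin_cases k <;> simp at hk <;> linarith

lemma regretMatching_rpsRegret_ne {p : Fin 3 → ℝ} (hp : p ∈ simplex3) :
    regretMatching (rpsRegret p) ≠ p := by
  intro h
  refine ne_zero_of_mem_simplex3 hp (eq_zero_of_pos_imp_shift_lt hp.1 2 fun j hj => ?_)
  have hreg := pos_of_regretMatching_pos (h.symm ▸ hj)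
  have hshift : ∀ i : Fin 3, i + 2 + 2 = i + 1 := by decide
  rw [hshift]
  simp only [rpsRegret] at hreg
  linarith

lemma regretMatching_neg_rpsRegret_ne {p : Fin 3 → ℝ} (hp : p ∈ simplex3) :
    regretMatching (-rpsRegret p) ≠ p := by
  intro h
  refine ne_zero_of_mem_simplex3 hp (eq_zero_of_pos_imp_shift_lt hp.1 1 fun j hj => ?_)
  have hreg := pos_of_regretMatching_pos (h.symm ▸ hj)
  have hshift : ∀ i : Fin 3, i + 1 + 1 = i + 2 := by decide
  rw [hshift]
  simp only [rpsRegret, Pi.neg_apply] at hreg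
  linarith

section Regrets

variable {x y : ℕ → Fin 3 → ℝ} {s t : ℕ}

lemma regX_eq_rpsRegret (h : x s = y s) : regX x y s = rpsRegret (x s) := by
  funext j
  fin_cases j <;>
    simp [regX, rpsRegret, dotp3, RPS, Matrix.mulVec, dotProduct, Fin.sum_univ_three, ← h] <;>
    ring

lemma regY_eq_rpsRegret (h : x s = y s) : regY x y s = rpsRegret (x s) := by
  funext j
  fin_cases j <;>
    simp [regY, rpsRegret, dotp3, RPS, Matrix.mulVec, dotProduct, Matrix.transpose,
      Fin.sum_univ_three, ← h] <;> ring

lemma RegX_eq_sum : RegX x y t = ∑ s ∈ Icc 1 t, regX x y s := by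
  funext j
  simp [RegX, Finset.sum_apply]

lemma RegX_succ : RegX x y (t + 1) = RegX x y t + regX x y (t + 1) := by
  rw [RegX_eq_sum, RegX_eq_sum, sum_Icc_succ_top (Nat.le_add_left 1 t)]

lemma RegX_eq_sum_range : RegX x y t = ∑ i ∈ range t, regX x y (i + 1) := by
  induction t with
  | zero => simp [RegX_eq_sum]
  | succ t ih => rw [RegX_succ, ih, sum_range_succ]

lemma RegY_eq_RegX (h : ∀ s, 1 ≤ s → s ≤ t → x s = y s) : RegY x y t = RegX x y t := by
  funext j
  refine sum_congr rfl fun s hs => ?_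
  obtain ⟨h1, h2⟩ := mem_Icc.1 hs
  rw [regY_eq_rpsRegret (h s h1 h2), regX_eq_rpsRegret (h s h1 h2)]

lemma sum_RegX_eq_zero (h : ∀ s, 1 ≤ s → s ≤ t → x s = y s) :
    ∑ j, RegX x y t j = 0 := by
  simp only [RegX]
  rw [sum_comm]
  refine sum_eq_zero fun s hs => ?_
  obtain ⟨h1, h2⟩ := mem_Icc.1 hs
  rw [regX_eq_rpsRegret (h s h1 h2), sum_rpsRegret]

end Regrets

namespace IsCFR

variable {x y : ℕ → Fin 3 → ℝ} {t : ℕ}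

lemma mem_simplex3 (hcfr : IsCFR x y) (ht : 1 ≤ t) : x t ∈ simplex3 := (hcfr.1 t ht).1

lemma x_succ (hcfr : IsCFR x y) (ht : 1 ≤ t) (hpos : 0 < ∑ k, max (RegX x y t k) 0) :
    x (t + 1) = regretMatching (RegX x y t) :=
  funext (hcfr.2.1 t ht hpos)

lemma y_succ (hcfr : IsCFR x y) (ht : 1 ≤ t) (hpos : 0 < ∑ k, max (RegY x y t k) 0) :
    y (t + 1) = regretMatching (RegY x y t) :=
  funext (hcfr.2.2 t ht hpos)

lemma symmetric_and_sum_max_pos (hcfr : IsCFR x y) (hinit : x 1 = y 1)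
    (himb : Imbalanced (x 1)) (ht : 1 ≤ t) :
    (∀ s, 1 ≤ s → s ≤ t → x s = y s) ∧ 0 < ∑ k, max (RegX x y t k) 0 := by
  induction t, ht using Nat.le_induction with
  | base =>
    have hsym : ∀ s, 1 ≤ s → s ≤ 1 → x s = y s := fun s h1 h2 =>
      le_antisymm h2 h1 ▸ hinit
    obtain ⟨lam, -, -, hzero⟩ := himb
    have hReg : RegX x y 1 = rpsRegret (x 1) := by
      rw [RegX_eq_sum, Icc_self, sum_singleton, regX_eq_rpsRegret hinit]
    refine ⟨hsym, ?_⟩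
    rw [hReg]
    exact sum_max_pos_of_sum_eq_zero (sum_rpsRegret _)
      (rpsRegret_ne_zero (hcfr.mem_simplex3 le_rfl) hzero)
  | succ u hu ih =>
    obtain ⟨hsym, hpos⟩ := ih
    have hRegY := RegY_eq_RegX hsym
    have hnext : x (u + 1) = y (u + 1) := by
      rw [hcfr.x_succ hu hpos, hcfr.y_succ hu (hRegY ▸ hpos), hRegY]
    have hsym' : ∀ s, 1 ≤ s → s ≤ u + 1 → x s = y s := fun s h1 h2 =>
      (Nat.le_succ_iff.1 h2).elim (hsym s h1) fun hs => hs ▸ hnext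
    refine ⟨hsym', sum_max_pos_of_sum_eq_zero (sum_RegX_eq_zero hsym') fun hzero => ?_⟩
    have hReg : RegX x y u = -rpsRegret (x (u + 1)) := by
      have hsucc : RegX x y (u + 1) = RegX x y u + regX x y (u + 1) := RegX_succ
      rw [hzero, regX_eq_rpsRegret hnext] at hsucc
      exact eq_neg_of_add_eq_zero_left hsucc.symm
    exact regretMatching_neg_rpsRegret_ne (hcfr.mem_simplex3 (by omega))
      (hReg ▸ (hcfr.x_succ hu hpos).symm)

end IsCFR

section Divergence

variable {x y : ℕ → Fin 3 → ℝ} {L : Fin 3 → ℝ}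

lemma tendsto_inv_smul_RegX (hsym : ∀ t, 1 ≤ t → x t = y t) (hL : Tendsto x atTop (𝓝 L)) :
    Tendsto (fun t : ℕ => (t : ℝ)⁻¹ • RegX x y t) atTop (𝓝 (rpsRegret L)) := by
  have hreg : Tendsto (fun i => regX x y (i + 1)) atTop (𝓝 (rpsRegret L)) :=
    ((continuous_rpsRegret.tendsto L).comp (hL.comp (tendsto_add_atTop_nat 1))).congr fun i =>
      (regX_eq_rpsRegret (hsym (i + 1) (Nat.le_add_left 1 i))).symm
  simpa only [RegX_eq_sum_range] using hreg.cesaro_smul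

lemma IsCFR.exists_succ_eq_zero (hcfr : IsCFR x y) {t : ℕ} (ht : 1 ≤ t)
    (hsym : ∀ s, 1 ≤ s → s ≤ t → x s = y s) (hpos : 0 < ∑ k, max (RegX x y t k) 0) :
    ∃ j, x (t + 1) j = 0 := by
  obtain ⟨j, -, hj⟩ := exists_le_of_sum_le (f := RegX x y t) (g := 0) univ_nonempty
    (by simp [sum_RegX_eq_zero hsym])
  exact ⟨j, hcfr.x_succ ht hpos ▸ regretMatching_eq_zero_of_nonpos hj⟩

lemma IsCFR.exists_eq_zero_of_tendsto (hcfr : IsCFR x y) (hsym : ∀ t, 1 ≤ t → x t = y t)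
    (hpos : ∀ t, 1 ≤ t → 0 < ∑ k, max (RegX x y t k) 0) (hL : Tendsto x atTop (𝓝 L)) :
    ∃ k, L k = 0 := by
  have hprod : Tendsto (fun t => ∏ j, x (t + 1) j) atTop (𝓝 (∏ j, L j)) :=
    tendsto_finsetProd _ fun j _ => tendsto_pi_nhds.1 (hL.comp (tendsto_add_atTop_nat 1)) j
  have hzero : ∏ j, L j = 0 := by
    refine tendsto_nhds_unique hprod (tendsto_const_nhds.congr' ?_)
    filter_upwards [eventually_ge_atTop 1] with t ht
    obtain ⟨j, hj⟩ := hcfr.exists_succ_eq_zero ht (fun s h1 _ => hsym s h1) (hpos t ht)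
    exact (prod_eq_zero (mem_univ j) hj).symm
  obtain ⟨k, -, hk⟩ := prod_eq_zero_iff.1 hzero
  exact ⟨k, hk⟩

lemma IsCFR.not_tendsto (hcfr : IsCFR x y) (hsym : ∀ t, 1 ≤ t → x t = y t)
    (hpos : ∀ t, 1 ≤ t → 0 < ∑ k, max (RegX x y t k) 0) : ¬ Tendsto x atTop (𝓝 L) := by
  intro hL
  have hLs : L ∈ simplex3 := isClosed_simplex3.mem_of_tendsto hL
    (eventually_atTop.2 ⟨1, fun t ht => hcfr.mem_simplex3 ht⟩)
  obtain ⟨k, hk⟩ := hcfr.exists_eq_zero_of_tendsto hsym hpos hL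
  have hmass : 0 < ∑ j, max (rpsRegret L j) 0 :=
    sum_max_pos_of_sum_eq_zero (sum_rpsRegret L) (rpsRegret_ne_zero hLs hk)
  have hnext : ∀ t : ℕ, 1 ≤ t → regretMatching ((t : ℝ)⁻¹ • RegX x y t) = x (t + 1) :=
    fun t ht => by
      rw [regretMatching_smul (inv_pos.2 (Nat.cast_pos.2 ht)), hcfr.x_succ ht (hpos t ht)]
  have hlim : Tendsto (fun t => x (t + 1)) atTop (𝓝 (regretMatching (rpsRegret L))) :=
    ((continuousAt_regretMatching hmass.ne').tendsto.comp (tendsto_inv_smul_RegX hsym hL)).congr'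
      (eventually_atTop.2 ⟨1, hnext⟩)
  exact regretMatching_rpsRegret_ne hLs
    (tendsto_nhds_unique hlim (hL.comp (tendsto_add_atTop_nat 1)))

end Divergence

/-- Theorem 3: in rock-paper-scissors, CFR started from identical
imbalanced initial strategies `x₁ = y₁` keeps `x_t = y_t` for all `t ≥ 1` and produces
a sequence of iterates `x_t` that does not converge. -/
theorem cfr_diverges_in_rps (x y : ℕ → Fin 3 → ℝ) (hcfr : IsCFR x y)
    (hinit : x 1 = y 1) (himb : Imbalanced (x 1)) :
    (∀ t : ℕ, 1 ≤ t → x t = y t) ∧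
    ¬ ∃ L : Fin 3 → ℝ, Tendsto x atTop (𝓝 L) := by
  have key := fun t (ht : 1 ≤ t) => hcfr.symmetric_and_sum_max_pos hinit himb ht
  have hsym : ∀ t, 1 ≤ t → x t = y t := fun t ht => (key t ht).1 t ht le_rfl
  exact ⟨hsym, fun ⟨_, hL⟩ => hcfr.not_tendsto hsym (fun t ht => (key t ht).2) hL⟩
end
end

section
/- In the rock–paper–scissors game, if both players run CFR (regret matching with simultaneous updates) starting from identical imbalanced initial strategies x₁ = y₁, then for every t ≥ 1 the iterate x_t is imbalanced, i.e. there is a permutation λ of {1,2,3} with x_{t,λ(1)} ≥ x_{t,λ(2)} ≥ 0 = x_{t,λ(3)}. -/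
open Finset Filter Topology

noncomputable section

/- ### Auxiliary lemmas -/

lemma gv0 (v : Fin 3 → ℝ) : RPS.mulVec v 0 = v 2 - v 1 := by
  simp [RPS, Matrix.mulVec, dotProduct, Fin.sum_univ_three]; ring

lemma gv1 (v : Fin 3 → ℝ) : RPS.mulVec v 1 = v 0 - v 2 := by
  simp [RPS, Matrix.mulVec, dotProduct, Fin.sum_univ_three]; ring

lemma gv2 (v : Fin 3 → ℝ) : RPS.mulVec v 2 = v 1 - v 0 := by
  simp [RPS, Matrix.mulVec, dotProduct, Fin.sum_univ_three]; ring

lemma skew (v : Fin 3 → ℝ) : dotp3 v (RPS.mulVec v) = 0 := by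
  simp [dotp3, Fin.sum_univ_three, gv0, gv1, gv2]; ring

lemma transp (v : Fin 3 → ℝ) : -(RPS.transpose.mulVec v) = RPS.mulVec v := by
  funext j
  fin_cases j <;>
    simp [RPS, Matrix.mulVec, dotProduct, Fin.sum_univ_three, Matrix.transpose] <;> ring

lemma regX_eq (x y : ℕ → Fin 3 → ℝ) (t : ℕ) (h : x t = y t) (j : Fin 3) :
    regX x y t j = -(RPS.mulVec (x t) j) := by
  rw [regX, ← h, skew]; ring

lemma regY_eq (x y : ℕ → Fin 3 → ℝ) (t : ℕ) (h : x t = y t) (j : Fin 3) :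
    regY x y t j = -(RPS.mulVec (x t) j) := by
  rw [regY, transp, ← h, skew]; ring

def mkPerm (f g : Fin 3 → Fin 3) (h1 : ∀ i, g (f i) = i) (h2 : ∀ i, f (g i) = i) :
    Equiv.Perm (Fin 3) := ⟨f, g, h1, h2⟩

lemma imb_of_nonneg_zero (v : Fin 3 → ℝ) (hv : ∀ i, 0 ≤ v i) (j : Fin 3) (hj : v j = 0) :
    Imbalanced v := by
  fin_cases j
  · rcases le_total (v 1) (v 2) with h | h
    · exact ⟨mkPerm ![2,1,0] ![2,1,0] (by decide) (by decide), by
        simpa [mkPerm] using ⟨h, hv 1, hj⟩⟩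
    · exact ⟨mkPerm ![1,2,0] ![2,0,1] (by decide) (by decide), by
        simpa [mkPerm] using ⟨h, hv 2, hj⟩⟩
  · rcases le_total (v 0) (v 2) with h | h
    · exact ⟨mkPerm ![2,0,1] ![1,2,0] (by decide) (by decide), by
        simpa [mkPerm] using ⟨h, hv 0, hj⟩⟩
    · exact ⟨mkPerm ![0,2,1] ![0,2,1] (by decide) (by decide), by
        simpa [mkPerm] using ⟨h, hv 2, hj⟩⟩
  · rcases le_total (v 0) (v 1) with h | h
    · exact ⟨mkPerm ![1,0,2] ![1,0,2] (by decide) (by decide), by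
        simpa [mkPerm] using ⟨h, hv 0, hj⟩⟩
    · exact ⟨mkPerm ![0,1,2] ![0,1,2] (by decide) (by decide), by
        simpa [mkPerm] using ⟨h, hv 1, hj⟩⟩

lemma max_mul_self (a : ℝ) : max a 0 * a = max a 0 ^ 2 := by
  rcases le_total a 0 with h | h
  · rw [max_eq_right h]; simp
  · rw [max_eq_left h]; ring

/-- in rock-paper-scissors, CFR started from identical imbalanced
initial strategies `x₁ = y₁` produces an imbalanced iterate `x_t` for every `t ≥ 1`. -/
theorem cfr_iterates_imbalanced_in_rps (x y : ℕ → Fin 3 → ℝ) (hcfr : IsCFR x y)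
    (hinit : x 1 = y 1) (himb : Imbalanced (x 1)) :
    ∀ t : ℕ, 1 ≤ t → Imbalanced (x t) := by
  obtain ⟨hsimp, hupx, hupy⟩ := hcfr
  suffices H : ∀ n : ℕ, x (n+1) = y (n+1) ∧ (∀ j, 0 ≤ x (n+1) j) ∧ Imbalanced (x (n+1)) ∧
      (∀ j, RegX x y (n+1) j = RegY x y (n+1) j) ∧ (∑ j, RegX x y (n+1) j = 0) ∧
      (∃ j, 0 < RegX x y (n+1) j) by
    intro t ht
    obtain ⟨n, rfl⟩ : ∃ n, t = n + 1 := ⟨t - 1, by omega⟩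
    exact (H n).2.2.1
  intro n
  induction n with
  | zero =>
    have hx1 := (hsimp 1 le_rfl).1
    have R1 : ∀ j, RegX x y 1 j = -(RPS.mulVec (x 1) j) := fun j => by
      rw [RegX, Finset.Icc_self, Finset.sum_singleton, regX_eq x y 1 hinit]
    have R1' : ∀ j, RegY x y 1 j = -(RPS.mulVec (x 1) j) := fun j => by
      rw [RegY, Finset.Icc_self, Finset.sum_singleton, regY_eq x y 1 hinit]
    have hsum : ∑ j, RegX x y 1 j = 0 := by
      rw [Fin.sum_univ_three, R1 0, R1 1, R1 2, gv0, gv1, gv2]; ring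
    refine ⟨hinit, hx1.1, himb, fun j => by rw [R1 j, R1' j], hsum, ?_⟩
    by_contra hno
    push_neg at hno
    have hs3 : RegX x y 1 0 + RegX x y 1 1 + RegX x y 1 2 = 0 := by
      simpa [Fin.sum_univ_three] using hsum
    have e0 : RegX x y 1 0 = 0 := by linarith [hno 0, hno 1, hno 2]
    have e1 : RegX x y 1 1 = 0 := by linarith [hno 0, hno 1, hno 2]
    have e2 : RegX x y 1 2 = 0 := by linarith [hno 0, hno 1, hno 2]
    rw [R1 0, gv0] at e0
    rw [R1 1, gv1] at e1
    rw [R1 2, gv2] at e2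
    obtain ⟨lam, _, _, h3⟩ := himb
    have hone : x 1 0 + x 1 1 + x 1 2 = 1 := by
      simpa [Fin.sum_univ_three] using hx1.2
    have hall : ∀ i : Fin 3, x 1 i = x 1 0 := by
      intro i
      fin_cases i
      · rfl
      · show x 1 1 = x 1 0; linarith
      · show x 1 2 = x 1 0; linarith
    have := hall (lam 2)
    rw [h3] at this
    linarith [hall 1, hall 2]
  | succ n ih =>
    obtain ⟨hxy, hnn, _, hRR, hsum, j0, hj0⟩ := ih
    have hs3 : RegX x y (n+1) 0 + RegX x y (n+1) 1 + RegX x y (n+1) 2 = 0 := by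
      simpa [Fin.sum_univ_three] using hsum
    have hZ3 : ∑ k, max (RegX x y (n+1) k) 0 =
        max (RegX x y (n+1) 0) 0 + max (RegX x y (n+1) 1) 0 + max (RegX x y (n+1) 2) 0 :=
      Fin.sum_univ_three _
    have hj0' : 0 < RegX x y (n+1) 0 ∨ 0 < RegX x y (n+1) 1 ∨ 0 < RegX x y (n+1) 2 := by
      fin_cases j0
      · exact Or.inl hj0
      · exact Or.inr (Or.inl hj0)
      · exact Or.inr (Or.inr hj0)
    have hZpos : 0 < ∑ k, max (RegX x y (n+1) k) 0 := by
      rw [hZ3]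
      rcases hj0' with h | h | h <;>
        linarith [le_max_left (RegX x y (n+1) 0) 0, le_max_left (RegX x y (n+1) 1) 0,
          le_max_left (RegX x y (n+1) 2) 0, le_max_right (RegX x y (n+1) 0) 0,
          le_max_right (RegX x y (n+1) 1) 0, le_max_right (RegX x y (n+1) 2) 0]
    have hZy : ∑ k, max (RegY x y (n+1) k) 0 = ∑ k, max (RegX x y (n+1) k) 0 :=
      Finset.sum_congr rfl fun k _ => by rw [hRR k]
    have hxs : ∀ j, x (n+1+1) j = max (RegX x y (n+1) j) 0 / ∑ k, max (RegX x y (n+1) k) 0 :=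
      hupx (n+1) (by omega) hZpos
    have hys : ∀ j, y (n+1+1) j = max (RegX x y (n+1) j) 0 / ∑ k, max (RegX x y (n+1) k) 0 := by
      intro j
      rw [hupy (n+1) (by omega) (by rw [hZy]; exact hZpos) j, hZy, hRR j]
    have hxy' : x (n+1+1) = y (n+1+1) := funext fun j => by rw [hxs j, hys j]
    have hnn' : ∀ j, 0 ≤ x (n+1+1) j := fun j => by
      rw [hxs j]; exact div_nonneg (le_max_right _ _) hZpos.le
    have hneg : ∃ j, RegX x y (n+1) j < 0 := by
      by_contra h
      push_neg at h
      have : RegX x y (n+1) j0 ≤ ∑ j, RegX x y (n+1) j :=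
        Finset.single_le_sum (fun i _ => h i) (Finset.mem_univ j0)
      rw [hsum] at this
      linarith
    obtain ⟨j1, hj1⟩ := hneg
    have himb' : Imbalanced (x (n+1+1)) :=
      imb_of_nonneg_zero _ hnn' j1 (by rw [hxs j1, max_eq_right hj1.le, zero_div])
    have RS : ∀ j, RegX x y (n+1+1) j = RegX x y (n+1) j + regX x y (n+1+1) j := fun j => by
      rw [RegX, Finset.sum_Icc_succ_top (by omega : 1 ≤ n+1+1)]; rfl
    have RSY : ∀ j, RegY x y (n+1+1) j = RegY x y (n+1) j + regY x y (n+1+1) j := fun j => by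
      rw [RegY, Finset.sum_Icc_succ_top (by omega : 1 ≤ n+1+1)]; rfl
    have hreg : ∀ j, regX x y (n+1+1) j = -(RPS.mulVec (x (n+1+1)) j) :=
      regX_eq x y (n+1+1) hxy'
    have hregY : ∀ j, regY x y (n+1+1) j = -(RPS.mulVec (x (n+1+1)) j) :=
      regY_eq x y (n+1+1) hxy'
    have hRR' : ∀ j, RegX x y (n+1+1) j = RegY x y (n+1+1) j := fun j => by
      rw [RS j, RSY j, hRR j, hreg j, hregY j]
    have hsum' : ∑ j, RegX x y (n+1+1) j = 0 := by
      rw [Fin.sum_univ_three, RS 0, RS 1, RS 2, hreg 0, hreg 1, hreg 2, gv0, gv1, gv2]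
      linear_combination hs3
    refine ⟨hxy', hnn', himb', hRR', hsum', ?_⟩
    by_contra hno
    push_neg at hno
    have hs3' : RegX x y (n+1+1) 0 + RegX x y (n+1+1) 1 + RegX x y (n+1+1) 2 = 0 := by
      simpa [Fin.sum_univ_three] using hsum'
    have z0 : RegX x y (n+1+1) 0 = 0 := by linarith [hno 0, hno 1, hno 2]
    have z1 : RegX x y (n+1+1) 1 = 0 := by linarith [hno 0, hno 1, hno 2]
    have z2 : RegX x y (n+1+1) 2 = 0 := by linarith [hno 0, hno 1, hno 2]
    have e0 : RPS.mulVec (x (n+1+1)) 0 = RegX x y (n+1) 0 := by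
      have h := RS 0; rw [hreg 0, z0] at h; linarith
    have e1 : RPS.mulVec (x (n+1+1)) 1 = RegX x y (n+1) 1 := by
      have h := RS 1; rw [hreg 1, z1] at h; linarith
    have e2 : RPS.mulVec (x (n+1+1)) 2 = RegX x y (n+1) 2 := by
      have h := RS 2; rw [hreg 2, z2] at h; linarith
    have hk := skew (x (n+1+1))
    rw [dotp3, Fin.sum_univ_three, e0, e1, e2, hxs 0, hxs 1, hxs 2] at hk
    have key : max (RegX x y (n+1) 0) 0 * RegX x y (n+1) 0
        + max (RegX x y (n+1) 1) 0 * RegX x y (n+1) 1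
        + max (RegX x y (n+1) 2) 0 * RegX x y (n+1) 2 = 0 := by
      field_simp at hk
      linarith
    rw [max_mul_self, max_mul_self, max_mul_self] at key
    set a0 := max (RegX x y (n+1) 0) 0 with ha0
    set a1 := max (RegX x y (n+1) 1) 0 with ha1
    set a2 := max (RegX x y (n+1) 2) 0 with ha2
    have n0 : 0 ≤ a0 := le_max_right _ _
    have n1 : 0 ≤ a1 := le_max_right _ _
    have n2 : 0 ≤ a2 := le_max_right _ _
    rw [hZ3] at hZpos
    nlinarith [mul_pos hZpos hZpos, mul_nonneg n0 n1, mul_nonneg n0 n2, mul_nonneg n1 n2]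
end
end

section
/- (One-step regret bound for optimistic online mirror descent.) Suppose ψ is differentiable and 1-strongly convex with respect to the 2-norm on Z, that ‖F(z₁) − F(z₂)‖₂ ≤ L‖z₁ − z₂‖₂ for all z₁, z₂ ∈ Z and some L > 0, and that η ≤ 1/(8L). Then for any z ∈ Z and any t ≥ 1, the OOMD iterates satisfy η F(z_t)ᵀ(z_t − z) ≤ D_ψ(z, ẑ_t) − D_ψ(z, ẑ_{t+1}) − D_ψ(ẑ_{t+1}, z_t) − (15/16) D_ψ(z_t, ẑ_t) + (1/16) D_ψ(ẑ_t, z_{t−1}). -/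
open Finset Filter Topology

noncomputable section

/-- Squared Euclidean norm on `ℝ^n`. -/
def sqnorm {n : ℕ} (z : Fin n → ℝ) : ℝ := ∑ i, (z i) ^ 2

/-- Euclidean (2-)norm on `ℝ^n`. -/
def norm2 {n : ℕ} (z : Fin n → ℝ) : ℝ := Real.sqrt (sqnorm z)

/-- 1-norm on `ℝ^n`. -/
def norm1 {n : ℕ} (z : Fin n → ℝ) : ℝ := ∑ i, |z i|

/-- Dot product on `ℝ^n`. -/
def dotp {n : ℕ} (a b : Fin n → ℝ) : ℝ := ∑ i, a i * b i

/-- Treeplexes (Hoda et al.): probability simplexes, Cartesian products, and branching. -/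
inductive IsTreeplex : {n : ℕ} → Set (Fin n → ℝ) → Prop
  | simplex (m : ℕ) :
      IsTreeplex {x : Fin (m + 1) → ℝ | (∀ i, 0 ≤ x i) ∧ (∑ i, x i) = 1}
  | prod {m k : ℕ} {S : Set (Fin m → ℝ)} {T : Set (Fin k → ℝ)} :
      IsTreeplex S → IsTreeplex T →
      IsTreeplex {z : Fin (m + k) → ℝ | ∃ u ∈ S, ∃ v ∈ T, z = Fin.append u v}
  | branch {m k : ℕ} {S : Set (Fin m → ℝ)} {T : Set (Fin k → ℝ)} (i : Fin m) :
      IsTreeplex S → IsTreeplex T →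
      IsTreeplex {z : Fin (m + k) → ℝ | ∃ u ∈ S, ∃ v ∈ T,
        z = Fin.append u (fun j => u i * v j)}

/-- A point `z = (x, y)` of the product space `ℝ^M × ℝ^N`. -/
abbrev Pt (M N : ℕ) := (Fin M → ℝ) × (Fin N → ℝ)

def dotPt {M N : ℕ} (a b : Pt M N) : ℝ := dotp a.1 b.1 + dotp a.2 b.2

def sqnormPt {M N : ℕ} (z : Pt M N) : ℝ := sqnorm z.1 + sqnorm z.2

def norm2Pt {M N : ℕ} (z : Pt M N) : ℝ := Real.sqrt (sqnormPt z)

def norm1Pt {M N : ℕ} (z : Pt M N) : ℝ := norm1 z.1 + norm1 z.2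

/-- The game operator `F(z) = (G y, -Gᵀ x)`. -/
def Fop {M N : ℕ} (G : Matrix (Fin M) (Fin N) ℝ) (z : Pt M N) : Pt M N :=
  (G.mulVec z.2, -(G.transpose.mulVec z.1))

/-- Bregman divergence of `ψ` (via the Fréchet derivative). -/
def Dbreg {M N : ℕ} (ψ : Pt M N → ℝ) (u v : Pt M N) : ℝ :=
  ψ u - ψ v - fderiv ℝ ψ v (u - v)

/-- Bregman divergence on a single space. -/
def Dbreg1 {n : ℕ} (ψ : (Fin n → ℝ) → ℝ) (u v : Fin n → ℝ) : ℝ :=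
  ψ u - ψ v - fderiv ℝ ψ v (u - v)

/-- Optimistic online mirror descent with Bregman-divergence function `D`,
step size `η`, iterates `z` and `zh` (the latter is `ẑ`), started from an
arbitrary `ẑ₁ = z₀ ∈ Z`. -/
def IsOOMD {M N : ℕ} (G : Matrix (Fin M) (Fin N) ℝ) (Z : Set (Pt M N))
    (D : Pt M N → Pt M N → ℝ) (η : ℝ) (z zh : ℕ → Pt M N) : Prop :=
  z 0 ∈ Z ∧ zh 1 = z 0 ∧
  (∀ t : ℕ, 1 ≤ t → z t ∈ Z ∧
    ∀ w ∈ Z, η * dotPt (z t) (Fop G (z (t - 1))) + D (z t) (zh t) ≤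
      η * dotPt w (Fop G (z (t - 1))) + D w (zh t)) ∧
  (∀ t : ℕ, 1 ≤ t → zh (t + 1) ∈ Z ∧
    ∀ w ∈ Z, η * dotPt (zh (t + 1)) (Fop G (z t)) + D (zh (t + 1)) (zh t) ≤
      η * dotPt w (Fop G (z t)) + D w (zh t))

def maxPayoff {M N : ℕ} (G : Matrix (Fin M) (Fin N) ℝ) (Y : Set (Fin N → ℝ))
    (x : Fin M → ℝ) : ℝ :=
  sSup ((fun y => dotp x (G.mulVec y)) '' Y)

def minPayoff {M N : ℕ} (G : Matrix (Fin M) (Fin N) ℝ) (X : Set (Fin M → ℝ))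
    (y : Fin N → ℝ) : ℝ :=
  sInf ((fun x => dotp x (G.mulVec y)) '' X)

/-- `X* = argmin_{x ∈ X} max_{y ∈ Y} xᵀGy`. -/
def Xstar {M N : ℕ} (G : Matrix (Fin M) (Fin N) ℝ) (X : Set (Fin M → ℝ))
    (Y : Set (Fin N → ℝ)) : Set (Fin M → ℝ) :=
  {x ∈ X | ∀ x' ∈ X, maxPayoff G Y x ≤ maxPayoff G Y x'}

/-- `Y* = argmax_{y ∈ Y} min_{x ∈ X} xᵀGy`. -/
def Ystar {M N : ℕ} (G : Matrix (Fin M) (Fin N) ℝ) (X : Set (Fin M → ℝ))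
    (Y : Set (Fin N → ℝ)) : Set (Fin N → ℝ) :=
  {y ∈ Y | ∀ y' ∈ Y, minPayoff G X y' ≤ minPayoff G X y}

/-- The set of Nash equilibria `Z* = X* × Y*`. -/
def NashSet {M N : ℕ} (G : Matrix (Fin M) (Fin N) ℝ) (X : Set (Fin M → ℝ))
    (Y : Set (Fin N → ℝ)) : Set (Pt M N) :=
  (Xstar G X Y) ×ˢ (Ystar G X Y)

/-- Generalized KL divergence (Bregman divergence of the vanilla entropy),
with the convention `0 ln 0 = 0`. -/
def KLgen {n : ℕ} (u v : Fin n → ℝ) : ℝ :=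
  ∑ i, (u i * Real.log (u i / v i) - u i + v i)

def KLgenPt {M N : ℕ} (u v : Pt M N) : ℝ := KLgen u.1 v.1 + KLgen u.2 v.2

/-- The combinatorial structure of a treeplex in sequence form: indices `Fin n`,
information sets `Fin K`, the information set `owner i = h(i)` of each index,
and the parent index `parent h = σ(h)` of each information set (`none` for the
root convention `z_{σ(h)} = 1`), with an acyclicity witness. -/
structure TreeplexData (n K : ℕ) where
  owner : Fin n → Fin K
  parent : Fin K → Option (Fin n)
  rank : Fin K → ℕ
  parent_rank : ∀ (h : Fin K) (j : Fin n), parent h = some j → rank (owner j) < rank h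

/-- `z_{σ(h)}`, with the convention that it is `1` when `h` has no parent. -/
def TreeplexData.parentVal {n K : ℕ} (T : TreeplexData n K) (z : Fin n → ℝ) (h : Fin K) : ℝ :=
  (T.parent h).elim 1 z

/-- The treeplex determined by `T`: `z ≥ 0` with `∑_{i ∈ Ω_h} z_i = z_{σ(h)}`. -/
def TreeplexData.set {n K : ℕ} (T : TreeplexData n K) : Set (Fin n → ℝ) :=
  {z | (∀ i, 0 ≤ z i) ∧
    ∀ h : Fin K, (∑ i ∈ Finset.univ.filter (fun i => T.owner i = h), z i) = T.parentVal z h}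

/-- `q_i = z_i / z_{p_i}`. -/
def TreeplexData.q {n K : ℕ} (T : TreeplexData n K) (z : Fin n → ℝ) (i : Fin n) : ℝ :=
  z i / T.parentVal z (T.owner i)

/-- The dilated entropy `Ψ^dil_α(z) = ∑_i α_{h(i)} z_i ln q_i`. -/
def dilEnt {n K : ℕ} (T : TreeplexData n K) (α : Fin K → ℝ) (z : Fin n → ℝ) : ℝ :=
  ∑ i, α (T.owner i) * z i * Real.log (T.q z i)

/-- Bregman divergence of the dilated entropy:
`D(u, z) = ∑_i α_{h(i)} u_i ln(q^u_i / q^z_i)`, with `0 ln 0 = 0`. -/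
def dilEntBreg {n K : ℕ} (T : TreeplexData n K) (α : Fin K → ℝ) (u z : Fin n → ℝ) : ℝ :=
  ∑ i, α (T.owner i) * u i * Real.log (T.q u i / T.q z i)

/-- Coordinates of a pair `z = (x, y)` indexed by `Fin M ⊕ Fin N`. -/
def coordsOf {M N : ℕ} (z : Pt M N) : Fin M ⊕ Fin N → ℝ := Sum.elim z.1 z.2

/-! Write `a = ẑ_t`, `b = z_t`, `c = ẑ_{t+1}`, `f = F(z_t)`, `g = F(z_{t-1})`. First-order
optimality of the two prox steps, combined with the three-point identity for Bregman divergences,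
bounds `η⟨f, c - z⟩` and `η⟨g, b - c⟩`, leaving the cross term `η⟨f - g, b - c⟩`. Testing the two
prox steps against each other and using 1-strong convexity gives `‖b - c‖² ≤ η⟨b - c, f - g⟩`, so by
Cauchy–Schwarz the cross term is at most `η²‖f - g‖² ≤ 2η²L² (‖b - a‖² + ‖a - z_{t-1}‖²)`, which
strong convexity and `ηL ≤ 1/8` turn into `(D(b, a) + D(a, z_{t-1})) / 16`. -/

theorem smul_append_add_smul_append {R V : Type*} [Semiring R] [AddCommMonoid V] [Module R V]
    {m k : ℕ} (a b : R) (u u' : Fin m → V) (x x' : Fin k → V) :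
    a • Fin.append u x + b • Fin.append u' x' = Fin.append (a • u + b • u') (a • x + b • x') := by
  funext i
  refine Fin.addCases (fun i => ?_) (fun i => ?_) i <;> simp

theorem IsTreeplex.nonneg {n : ℕ} {S : Set (Fin n → ℝ)} (hS : IsTreeplex S) :
    ∀ z ∈ S, ∀ i, 0 ≤ z i := by
  induction hS with
  | simplex m => exact fun z hz i => hz.1 i
  | prod _ _ ihS ihT =>
      rintro _ ⟨u, hu, v, hv, rfl⟩ i
      refine Fin.addCases (fun i => ?_) (fun i => ?_) i
      · simpa using ihS u hu i
      · simpa using ihT v hv i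
  | branch j _ _ ihS ihT =>
      rintro _ ⟨u, hu, v, hv, rfl⟩ i
      refine Fin.addCases (fun i => ?_) (fun i => ?_) i
      · simpa using ihS u hu i
      · simpa using mul_nonneg (ihS u hu j) (ihT v hv i)

theorem IsTreeplex.convex {n : ℕ} {S : Set (Fin n → ℝ)} (hS : IsTreeplex S) : Convex ℝ S := by
  induction hS with
  | simplex m =>
      rintro x ⟨hx, hx1⟩ y ⟨hy, hy1⟩ a b ha hb hab
      refine ⟨fun i => ?_, ?_⟩
      · simpa using add_nonneg (mul_nonneg ha (hx i)) (mul_nonneg hb (hy i))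
      · simp [Finset.sum_add_distrib, ← Finset.mul_sum, hx1, hy1, hab]
  | prod _ _ ihS ihT =>
      rintro _ ⟨u, hu, v, hv, rfl⟩ _ ⟨u', hu', v', hv', rfl⟩ a b ha hb hab
      exact ⟨_, ihS hu hu' ha hb hab, _, ihT hv hv' ha hb hab, smul_append_add_smul_append ..⟩
  | branch j hS _ ihS ihT =>
      rintro _ ⟨u, hu, v, hv, rfl⟩ _ ⟨u', hu', v', hv', rfl⟩ a b ha hb hab
      -- the cone over a convex set is closed under addition
      obtain ⟨w, hw, hsum⟩ := ihT.exists_mem_add_smul_eq hv hv'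
        (mul_nonneg ha (hS.nonneg u hu j)) (mul_nonneg hb (hS.nonneg u' hu' j))
      refine ⟨a • u + b • u', ihS hu hu' ha hb hab, w, hw, ?_⟩
      rw [smul_append_add_smul_append]
      congr 1
      funext i
      simpa [mul_assoc] using (congrFun hsum i).symm

section Pt

variable {M N : ℕ}

theorem dotPt_comm (a b : Pt M N) : dotPt a b = dotPt b a := by
  simp [dotPt, dotp, mul_comm]

theorem dotPt_add_left (x y f : Pt M N) : dotPt (x + y) f = dotPt x f + dotPt y f := by
  simp only [dotPt, dotp, Prod.fst_add, Prod.snd_add, Pi.add_apply, add_mul, sum_add_distrib]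
  ring

theorem dotPt_smul_left (s : ℝ) (x f : Pt M N) : dotPt (s • x) f = s * dotPt x f := by
  simp only [dotPt, dotp, Prod.smul_fst, Prod.smul_snd, Pi.smul_apply, smul_eq_mul, mul_assoc,
    ← mul_sum]
  ring

theorem dotPt_sub_left (x y f : Pt M N) : dotPt (x - y) f = dotPt x f - dotPt y f := by
  simp only [dotPt, dotp, Prod.fst_sub, Prod.snd_sub, Pi.sub_apply, sub_mul, sum_sub_distrib]
  ring

theorem dotPt_sub_right (x f g : Pt M N) : dotPt x (f - g) = dotPt x f - dotPt x g := by
  rw [dotPt_comm, dotPt_sub_left, dotPt_comm f, dotPt_comm g]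

def dotPtLeft (f : Pt M N) : Pt M N →L[ℝ] ℝ :=
  LinearMap.toContinuousLinearMap
    { toFun := fun w => dotPt w f
      map_add' := fun x y => dotPt_add_left x y f
      map_smul' := fun s x => dotPt_smul_left s x f }

@[simp]
theorem dotPtLeft_apply (f w : Pt M N) : dotPtLeft f w = dotPt w f := rfl

theorem sqnormPt_nonneg (z : Pt M N) : 0 ≤ sqnormPt z :=
  add_nonneg (sum_nonneg fun _ _ => sq_nonneg _) (sum_nonneg fun _ _ => sq_nonneg _)

theorem norm2Pt_sq (z : Pt M N) : norm2Pt z ^ 2 = sqnormPt z :=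
  Real.sq_sqrt (sqnormPt_nonneg z)

theorem sqnormPt_sub_comm (x y : Pt M N) : sqnormPt (x - y) = sqnormPt (y - x) := by
  simp only [sqnormPt, sqnorm, Prod.fst_sub, Prod.snd_sub, Pi.sub_apply]
  congr 1 <;> exact sum_congr rfl fun i _ => by ring

theorem sqnormPt_add_le (x y : Pt M N) :
    sqnormPt (x + y) ≤ 2 * sqnormPt x + 2 * sqnormPt y := by
  have key {n : ℕ} (u v : Fin n → ℝ) : sqnorm (u + v) ≤ 2 * sqnorm u + 2 * sqnorm v := by
    simp only [sqnorm, Pi.add_apply, mul_sum, ← sum_add_distrib]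
    exact sum_le_sum fun i _ => by nlinarith [sq_nonneg (u i - v i)]
  simp only [sqnormPt, Prod.fst_add, Prod.snd_add]
  linarith [key x.1 y.1, key x.2 y.2]

theorem sq_dotPt_le (a b : Pt M N) : dotPt a b ^ 2 ≤ sqnormPt a * sqnormPt b := by
  have h : dotPt a b = ∑ i, coordsOf a i * coordsOf b i := by
    simp [dotPt, dotp, coordsOf, Fintype.sum_sum_type]
  have h' (z : Pt M N) : sqnormPt z = ∑ i, coordsOf z i ^ 2 := by
    simp [sqnormPt, sqnorm, coordsOf, Fintype.sum_sum_type]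
  rw [h, h', h']
  exact sum_mul_sq_le_sq_mul_sq _ _ _

theorem Dbreg_three_point (ψ : Pt M N → ℝ) (u v a : Pt M N) :
    Dbreg ψ u a - Dbreg ψ u v - Dbreg ψ v a =
      fderiv ℝ ψ v (u - v) - fderiv ℝ ψ a (u - v) := by
  have h : fderiv ℝ ψ a (u - a) - fderiv ℝ ψ a (v - a) = fderiv ℝ ψ a (u - v) := by
    rw [← map_sub, sub_sub_sub_cancel_right]
  simp only [Dbreg]
  linarith

theorem IsMinOn.mul_dotPt_sub_le {Z : Set (Pt M N)} (hZ : Convex ℝ Z) {ψ : Pt M N → ℝ}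
    {η : ℝ} {f a p w : Pt M N} (hψ : DifferentiableAt ℝ ψ p) (hp : p ∈ Z) (hw : w ∈ Z)
    (hmin : IsMinOn (fun w => η * dotPt w f + Dbreg ψ w a) Z p) :
    η * dotPt (p - w) f ≤ Dbreg ψ w a - Dbreg ψ w p - Dbreg ψ p a := by
  have hDbreg : HasFDerivAt (fun w => Dbreg ψ w a) (fderiv ℝ ψ p - fderiv ℝ ψ a) p := by
    have h : (fun w => Dbreg ψ w a) = fun w => ψ w - (ψ a - fderiv ℝ ψ a a) - fderiv ℝ ψ a w := by
      funext w
      simp only [Dbreg, map_sub]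
      ring
    rw [h]
    exact (hψ.hasFDerivAt.sub_const _).sub (fderiv ℝ ψ a).hasFDerivAt
  have hderiv : HasFDerivAt (fun w => η * dotPt w f + Dbreg ψ w a)
      (η • dotPtLeft f + (fderiv ℝ ψ p - fderiv ℝ ψ a)) p :=
    ((dotPtLeft f).hasFDerivAt.const_mul η).add hDbreg
  have hfirst := hmin.localize.hasFDerivWithinAt_nonneg hderiv.hasFDerivWithinAt
    (sub_mem_posTangentConeAt_of_segment_subset (hZ.segment_subset hp hw))
  simp only [sub_apply, add_apply, smul_apply, dotPtLeft_apply, smul_eq_mul] at hfirst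
  have hlin : dotPt (p - w) f = -dotPt (w - p) f := by
    rw [dotPt_sub_left, dotPt_sub_left]; ring
  rw [hlin]
  linarith [Dbreg_three_point ψ w p a]

theorem mul_le_sq_mul_of_sq_le_mul {x s q η : ℝ} (hη : 0 ≤ η) (hq : 0 ≤ q)
    (hx : x ^ 2 ≤ s * q) (hs : s ≤ η * x) : η * x ≤ η ^ 2 * q := by
  rcases le_or_gt x 0 with hx0 | hx0
  · nlinarith [mul_nonneg hη hq]
  · have : x ≤ η * q := by nlinarith [mul_le_mul_of_nonneg_right hs hq]
    nlinarith

theorem sq_mul_sqnormPt_le_of_lipschitz {Z : Set (Pt M N)} {ψ : Pt M N → ℝ}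
    (hsc : ∀ u ∈ Z, ∀ v ∈ Z, (1 / 2) * sqnormPt (u - v) ≤ Dbreg ψ u v)
    {η L : ℝ} (hη : 0 ≤ η) (hL : 0 < L) (hηL : η ≤ 1 / (8 * L)) {a b zp f g : Pt M N}
    (ha : a ∈ Z) (hb : b ∈ Z) (hzp : zp ∈ Z) (hfg : norm2Pt (f - g) ≤ L * norm2Pt (b - zp)) :
    η ^ 2 * sqnormPt (f - g) ≤ (1 / 16) * (Dbreg ψ b a + Dbreg ψ a zp) := by
  have hfg' : sqnormPt (f - g) ≤ L ^ 2 * sqnormPt (b - zp) := by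
    rw [← norm2Pt_sq, ← norm2Pt_sq, ← mul_pow]
    exact pow_le_pow_left₀ (Real.sqrt_nonneg _) hfg 2
  have hηL' : η ^ 2 * L ^ 2 ≤ 1 / 64 := by
    rw [le_div_iff₀ (by positivity)] at hηL
    nlinarith [mul_nonneg hη hL.le]
  have htri : sqnormPt (b - zp) ≤ 2 * sqnormPt (b - a) + 2 * sqnormPt (a - zp) := by
    simpa using sqnormPt_add_le (b - a) (a - zp)
  calc η ^ 2 * sqnormPt (f - g) ≤ η ^ 2 * (L ^ 2 * sqnormPt (b - zp)) := by gcongr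
    _ = (η ^ 2 * L ^ 2) * sqnormPt (b - zp) := by ring
    _ ≤ (1 / 64) * sqnormPt (b - zp) := by gcongr; exact sqnormPt_nonneg _
    _ ≤ (1 / 16) * (Dbreg ψ b a + Dbreg ψ a zp) := by
      linarith [hsc b hb a ha, hsc a ha zp hzp]

theorem oomd_step_bound {Z : Set (Pt M N)} (hZ : Convex ℝ Z) {ψ : Pt M N → ℝ}
    (hdiff : ∀ v ∈ Z, DifferentiableAt ℝ ψ v)
    (hsc : ∀ u ∈ Z, ∀ v ∈ Z, (1 / 2) * sqnormPt (u - v) ≤ Dbreg ψ u v)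
    {η L : ℝ} (hη : 0 < η) (hL : 0 < L) (hηL : η ≤ 1 / (8 * L)) {a b c zp zz f g : Pt M N}
    (ha : a ∈ Z) (hb : b ∈ Z) (hc : c ∈ Z) (hzp : zp ∈ Z) (hzz : zz ∈ Z)
    (hfg : norm2Pt (f - g) ≤ L * norm2Pt (b - zp))
    (hbmin : IsMinOn (fun w => η * dotPt w g + Dbreg ψ w a) Z b)
    (hcmin : IsMinOn (fun w => η * dotPt w f + Dbreg ψ w a) Z c) :
    η * dotPt f (b - zz) ≤ Dbreg ψ zz a - Dbreg ψ zz c - Dbreg ψ c b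
      - (15 / 16) * Dbreg ψ b a + (1 / 16) * Dbreg ψ a zp := by
  have hbc := hbmin.mul_dotPt_sub_le hZ (hdiff b hb) hb hc
  have hczz := hcmin.mul_dotPt_sub_le hZ (hdiff c hc) hc hzz
  have hcb := hcmin.mul_dotPt_sub_le hZ (hdiff c hc) hc hb
  have hstable : sqnormPt (b - c) ≤ η * dotPt (b - c) (f - g) := by
    have hswap : dotPt (c - b) f = -dotPt (b - c) f := by
      rw [dotPt_sub_left, dotPt_sub_left]; ring
    rw [hswap, mul_neg] at hcb
    rw [dotPt_sub_right, mul_sub]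
    linarith [hsc c hc b hb, hsc b hb c hc, sqnormPt_sub_comm c b]
  have hcross : η * dotPt (b - c) (f - g) ≤ (1 / 16) * (Dbreg ψ b a + Dbreg ψ a zp) :=
    (mul_le_sq_mul_of_sq_le_mul hη.le (sqnormPt_nonneg _) (sq_dotPt_le _ _) hstable).trans
      (sq_mul_sqnormPt_le_of_lipschitz hsc hη.le hL hηL ha hb hzp hfg)
  have hsplit : dotPt f (b - zz) = dotPt (c - zz) f + dotPt (b - c) g + dotPt (b - c) (f - g) := by
    rw [dotPt_comm, dotPt_sub_right]
    simp only [dotPt_sub_left]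
    ring
  rw [hsplit, mul_add, mul_add]
  linarith

end Pt

namespace IsOOMD

variable {M N : ℕ} {G : Matrix (Fin M) (Fin N) ℝ} {Z : Set (Pt M N)}
  {D : Pt M N → Pt M N → ℝ} {η : ℝ} {z zh : ℕ → Pt M N}

theorem z_mem (h : IsOOMD G Z D η z zh) (t : ℕ) : z t ∈ Z := by
  rcases t with _ | t
  · exact h.1
  · exact (h.2.2.1 (t + 1) t.succ_pos).1

theorem zh_mem (h : IsOOMD G Z D η z zh) {t : ℕ} (ht : 1 ≤ t) : zh t ∈ Z := by
  obtain ⟨s, rfl⟩ := Nat.exists_eq_add_of_le' ht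
  rcases s with _ | s
  · exact h.2.1 ▸ h.1
  · exact (h.2.2.2 (s + 1) s.succ_pos).1

theorem isMinOn_z (h : IsOOMD G Z D η z zh) {t : ℕ} (ht : 1 ≤ t) :
    IsMinOn (fun w => η * dotPt w (Fop G (z (t - 1))) + D w (zh t)) Z (z t) :=
  isMinOn_iff.2 (h.2.2.1 t ht).2

theorem isMinOn_zh (h : IsOOMD G Z D η z zh) {t : ℕ} (ht : 1 ≤ t) :
    IsMinOn (fun w => η * dotPt w (Fop G (z t)) + D w (zh t)) Z (zh (t + 1)) :=
  isMinOn_iff.2 (h.2.2.2 t ht).2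

end IsOOMD

theorem oomd_one_step_regret_general {M N : ℕ}
    (G : Matrix (Fin M) (Fin N) ℝ)
    (X : Set (Fin M → ℝ)) (Y : Set (Fin N → ℝ))
    (hX : IsTreeplex X) (hY : IsTreeplex Y)
    (ψ : Pt M N → ℝ)
    (hdiff : ∀ v ∈ X ×ˢ Y, DifferentiableAt ℝ ψ v)
    (hsc : ∀ u ∈ X ×ˢ Y, ∀ v ∈ X ×ˢ Y, (1 / 2) * sqnormPt (u - v) ≤ Dbreg ψ u v)
    (L : ℝ) (hL : 0 < L)
    (hLip : ∀ z₁ ∈ X ×ˢ Y, ∀ z₂ ∈ X ×ˢ Y,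
      norm2Pt (Fop G z₁ - Fop G z₂) ≤ L * norm2Pt (z₁ - z₂))
    (η : ℝ) (hη : 0 < η) (hηL : η ≤ 1 / (8 * L))
    (z zh : ℕ → Pt M N) (hoomd : IsOOMD G (X ×ˢ Y) (Dbreg ψ) η z zh) :
    ∀ zz ∈ X ×ˢ Y, ∀ t : ℕ, 1 ≤ t →
      η * dotPt (Fop G (z t)) (z t - zz) ≤
        Dbreg ψ zz (zh t) - Dbreg ψ zz (zh (t + 1)) - Dbreg ψ (zh (t + 1)) (z t)
          - (15 / 16) * Dbreg ψ (z t) (zh t) + (1 / 16) * Dbreg ψ (zh t) (z (t - 1)) := by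
  intro zz hzz t ht
  exact oomd_step_bound (hX.convex.prod hY.convex) hdiff hsc hη hL hηL
    (hoomd.zh_mem ht) (hoomd.z_mem t) (hoomd.zh_mem (by omega)) (hoomd.z_mem (t - 1)) hzz
    (hLip _ (hoomd.z_mem t) _ (hoomd.z_mem (t - 1))) (hoomd.isMinOn_z ht) (hoomd.isMinOn_zh ht)

/-- Lemma 7: one-step regret bound for optimistic online mirror
descent over the treeplex product `Z = X × Y`, for a differentiable regularizer `ψ`
that is 1-strongly convex w.r.t. the 2-norm, an `L`-Lipschitz operator `F`, and
step size `η ≤ 1/(8L)`. -/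
theorem oomd_one_step_regret {M N : ℕ}
    (G : Matrix (Fin M) (Fin N) ℝ) (hG : ∀ i j, |G i j| ≤ 1)
    (X : Set (Fin M → ℝ)) (Y : Set (Fin N → ℝ))
    (hX : IsTreeplex X) (hY : IsTreeplex Y)
    (ψ : Pt M N → ℝ)
    (hdiff : ∀ v ∈ X ×ˢ Y, DifferentiableAt ℝ ψ v)
    (hsc : ∀ u ∈ X ×ˢ Y, ∀ v ∈ X ×ˢ Y, (1 / 2) * sqnormPt (u - v) ≤ Dbreg ψ u v)
    (L : ℝ) (hL : 0 < L)
    (hLip : ∀ z₁ ∈ X ×ˢ Y, ∀ z₂ ∈ X ×ˢ Y,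
      norm2Pt (Fop G z₁ - Fop G z₂) ≤ L * norm2Pt (z₁ - z₂))
    (η : ℝ) (hη : 0 < η) (hηL : η ≤ 1 / (8 * L))
    (z zh : ℕ → Pt M N) (hoomd : IsOOMD G (X ×ˢ Y) (Dbreg ψ) η z zh) :
    ∀ zz ∈ X ×ˢ Y, ∀ t : ℕ, 1 ≤ t →
      η * dotPt (Fop G (z t)) (z t - zz) ≤
        Dbreg ψ zz (zh t) - Dbreg ψ zz (zh (t + 1)) - Dbreg ψ (zh (t + 1)) (z t)
          - (15 / 16) * Dbreg ψ (z t) (zh t) + (1 / 16) * Dbreg ψ (zh t) (z (t - 1)) :=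
  oomd_one_step_regret_general G X Y hX hY ψ hdiff hsc L hL hLip η hη hηL z zh hoomd
end
end

section
/- For all real numbers u ∈ [0,1] and v ∈ (0,1], the following inequalities hold: (u − v)²/2 ≤ u ln(u/v) − u + v ≤ (u − v)²/v, where for u = 0 the expression u ln(u/v) is interpreted as 0. -/
/-!
Write `f(u) = u log(u/v) - u + v`. The upper bound is `log t ≤ t - 1` at `t = u/v`.
For the lower bound one shows `(u - v)² / (2 max u v) ≤ f(u)`, which suffices because
`max u v ≤ 1`. If `u ≤ v` this follows from `sinh (log t) ≤ log t` at `t = u/v ≤ 1`,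
i.e. `(t - t⁻¹)/2 ≤ log t`; if `v ≤ u`, from the first two terms of the series
`-log (1 - y) = ∑ yⁿ⁺¹/(n+1)` at `1 - y = v/u`.
-/

open Real Finset

namespace Real

lemma sub_inv_div_two_le_log {x : ℝ} (hx0 : 0 < x) (hx1 : x ≤ 1) : (x - x⁻¹) / 2 ≤ log x := by
  rw [← sinh_log hx0, sinh_le_self_iff]
  exact log_nonpos hx0.le hx1

lemma log_le_sub_one_sub_sq_div_two {x : ℝ} (hx0 : 0 < x) (hx1 : x ≤ 1) :
    log x ≤ x - 1 - (x - 1) ^ 2 / 2 := by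
  have hy : 0 ≤ 1 - x := by linarith
  have hsum := sum_le_hasSum (range 2) (fun _ _ => by positivity)
    (hasSum_pow_div_log_of_abs_lt_one (x := 1 - x) (abs_lt.mpr ⟨by linarith, by linarith⟩))
  norm_num [sum_range_succ] at hsum
  linarith

end Real

section EntropyTerm

variable {u v : ℝ}

lemma sq_sub_div_two_mul_le_mul_log_div_of_le (hu : 0 ≤ u) (huv : u ≤ v) (hv : 0 < v) :
    (u - v) ^ 2 / (2 * v) ≤ u * log (u / v) - u + v := by
  rcases hu.eq_or_lt with rfl | hu
  · simp only [zero_sub, neg_sq, zero_mul, sub_zero, zero_add]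
    rw [div_le_iff₀ (by positivity)]
    nlinarith
  have hlog := sub_inv_div_two_le_log (div_pos hu hv) ((div_le_one hv).mpr huv)
  have key : u * ((u / v - (u / v)⁻¹) / 2) - u + v = (u - v) ^ 2 / (2 * v) := by
    field_simp
    ring
  rw [← key]
  gcongr

lemma sq_sub_div_two_mul_le_mul_log_div_of_ge (hv : 0 < v) (hvu : v ≤ u) :
    (u - v) ^ 2 / (2 * u) ≤ u * log (u / v) - u + v := by
  have hu : 0 < u := hv.trans_le hvu
  have hlog := log_le_sub_one_sub_sq_div_two (div_pos hv hu) ((div_le_one hu).mpr hvu)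
  have key : -u * (v / u - 1 - (v / u - 1) ^ 2 / 2) - u + v = (u - v) ^ 2 / (2 * u) := by
    field_simp
    ring
  rw [← key, ← inv_div v u, log_inv]
  linarith [mul_le_mul_of_nonneg_left hlog hu.le]

lemma sq_sub_div_two_mul_max_le_mul_log_div (hu : 0 ≤ u) (hv : 0 < v) :
    (u - v) ^ 2 / (2 * max u v) ≤ u * log (u / v) - u + v := by
  rcases le_total u v with huv | hvu
  · rw [max_eq_right huv]
    exact sq_sub_div_two_mul_le_mul_log_div_of_le hu huv hv
  · rw [max_eq_left hvu]
    exact sq_sub_div_two_mul_le_mul_log_div_of_ge hv hvu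

lemma mul_log_div_sub_add_le_sq_sub_div (hu : 0 ≤ u) (hv : 0 < v) :
    u * log (u / v) - u + v ≤ (u - v) ^ 2 / v := by
  rcases hu.eq_or_lt with rfl | hu
  · simp only [zero_sub, neg_sq, zero_mul, sub_zero, zero_add]
    rw [sq, mul_div_assoc, div_self hv.ne', mul_one]
  have key : u * (u / v - 1) - u + v = (u - v) ^ 2 / v := by
    field_simp
    ring
  rw [← key]
  gcongr
  exact log_le_sub_one_of_pos (div_pos hu hv)

end EntropyTerm

/-- Lemma 10: for `u ∈ [0,1]` and `v ∈ (0,1]`,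
`(u − v)²/2 ≤ u ln(u/v) − u + v ≤ (u − v)²/v` (with `0 · ln(0/v) = 0`;
note `Real.log 0 = 0` in Mathlib, so `u * Real.log (u / v)` realizes this
convention automatically). -/
theorem entropy_one_dim_bounds (u v : ℝ) (hu0 : 0 ≤ u) (hu1 : u ≤ 1)
    (hv0 : 0 < v) (hv1 : v ≤ 1) :
    (u - v) ^ 2 / 2 ≤ u * Real.log (u / v) - u + v ∧
    u * Real.log (u / v) - u + v ≤ (u - v) ^ 2 / v := by
  refine ⟨le_trans ?_ (sq_sub_div_two_mul_max_le_mul_log_div hu0 hv0),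
    mul_log_div_sub_add_le_sq_sub_div hu0 hv0⟩
  gcongr
  linarith [max_le hu1 hv1]
end

section
/- (Strong convexity of the vanilla entropy with respect to the 2-norm.) For any vectors z ∈ [0,1]^P and z' ∈ (0,1]^P, the generalized KL divergence satisfies Σ_{i=1}^P (z_i ln(z_i/z'_i) − z_i + z'_i) ≥ (1/2) Σ_{i=1}^P (z_i − z'_i)², where terms with z_i = 0 are interpreted with 0 ln 0 := 0. In particular, the vanilla entropy regularizer Ψ^van(z) = Σ_i z_i ln z_i is 1-strongly convex with respect to the 2-norm on any treeplex. -/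
open Finset Real Set

/-!
Coordinatewise, with `1` replaced by any `c ≥ max a b` (`b > 0`): the gap
`g x = x log (x / b) - x + b - (x - b)² / (2c)` vanishes at `x = b` and has derivative
`log (x / b) - (x - b) / c`. The bounds `1 - b / x ≤ log (x / b) ≤ x / b - 1` show that
this derivative is `≤ 0` on `(0, b]` and `≥ 0` on `[b, c]`, so `g ≥ 0` on `[0, c]`.
-/

lemma hasDerivAt_mul_log_div_sub_add {b x : ℝ} (hb : b ≠ 0) (hx : x ≠ 0) :
    HasDerivAt (fun y => y * log (y / b) - y + b) (log (x / b)) x := by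
  have hlog : HasDerivAt (fun y => log (y / b)) (1 / b / (x / b)) x :=
    ((hasDerivAt_id' x).div_const b).log (div_ne_zero hx hb)
  refine ((((hasDerivAt_id' x).mul hlog).sub (hasDerivAt_id' x)).add_const b).congr_deriv ?_
  field_simp
  ring

lemma log_div_le_sub_div {x b c : ℝ} (hx : 0 < x) (hxb : x ≤ b) (hbc : b ≤ c) :
    log (x / b) ≤ (x - b) / c := by
  have hb : 0 < b := hx.trans_le hxb
  calc log (x / b) ≤ x / b - 1 := log_le_sub_one_of_pos (div_pos hx hb)
    _ = (x - b) / b := by field_simp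
    _ ≤ (x - b) / c := by
      rw [div_le_div_iff₀ hb (hb.trans_le hbc)]
      nlinarith

lemma sub_div_le_log_div {x b c : ℝ} (hb : 0 < b) (hbx : b ≤ x) (hxc : x ≤ c) :
    (x - b) / c ≤ log (x / b) := by
  have hx : 0 < x := hb.trans_le hbx
  calc (x - b) / c ≤ (x - b) / x := div_le_div_of_nonneg_left (by linarith) hx hxc
    _ = 1 - (x / b)⁻¹ := by field_simp
    _ ≤ log (x / b) := one_sub_inv_le_log_of_pos (div_pos hx hb)

theorem sq_sub_div_le_mul_log_div_sub_add {a b c : ℝ} (ha : 0 ≤ a) (hb : 0 < b) (hac : a ≤ c)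
    (hbc : b ≤ c) : (a - b) ^ 2 / (2 * c) ≤ a * log (a / b) - a + b := by
  set g : ℝ → ℝ := fun x => x * log (x / b) - x + b - (x - b) ^ 2 / (2 * c)
  have hc : 0 < c := hb.trans_le hbc
  have hg' : ∀ x, 0 < x → HasDerivAt g (log (x / b) - (x - b) / c) x := by
    intro x hx
    have hsq : HasDerivAt (fun y => (y - b) ^ 2 / (2 * c)) ((x - b) / c) x := by
      refine ((((hasDerivAt_id' x).sub_const b).pow 2).div_const (2 * c)).congr_deriv ?_
      field_simp
      ring
    exact (hasDerivAt_mul_log_div_sub_add hb.ne' hx.ne').sub hsq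
  have hcont : ∀ p q, 0 < p → ContinuousOn g (Icc p q) := fun p q hp x hx =>
    (hg' x (hp.trans_le hx.1)).continuousAt.continuousWithinAt
  have hderiv : ∀ p q, 0 < p → ∀ x ∈ interior (Icc p q),
      HasDerivWithinAt g (log (x / b) - (x - b) / c) (interior (Icc p q)) x := by
    intro p q hp x hx
    rw [interior_Icc] at hx
    exact (hg' x (hp.trans hx.1)).hasDerivWithinAt
  have hgb : g b = 0 := by simp [g, div_self hb.ne']
  suffices 0 ≤ g a by simp only [g] at this; linarith
  rcases le_total b a with hba | hab
  · refine hgb ▸ monotoneOn_of_hasDerivWithinAt_nonneg (convex_Icc b a) (hcont b a hb)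
      (hderiv b a hb) (fun x hx => ?_) (left_mem_Icc.2 hba) (right_mem_Icc.2 hba) hba
    rw [interior_Icc] at hx
    exact sub_nonneg.2 (sub_div_le_log_div hb hx.1.le (hx.2.le.trans hac))
  rcases ha.eq_or_lt with rfl | ha
  · have : b ^ 2 / (2 * c) ≤ b := by
      rw [div_le_iff₀ (by positivity)]
      nlinarith
    simpa [g] using this
  · refine hgb ▸ antitoneOn_of_hasDerivWithinAt_nonpos (convex_Icc a b) (hcont a b ha)
      (hderiv a b ha) (fun x hx => ?_) (left_mem_Icc.2 hab) (right_mem_Icc.2 hab) hab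
    rw [interior_Icc] at hx
    exact sub_nonpos.2 (log_div_le_sub_div (ha.trans hx.1) hx.2.le hbc)

/-- Lemma 11: strong convexity of the vanilla entropy w.r.t. the
2-norm.  For `z ∈ [0,1]^P` and `z' ∈ (0,1]^P`, the generalized KL divergence (the
Bregman divergence of `Ψ^van(z) = ∑ z_i ln z_i`, with `0 ln 0 = 0`) satisfies
`∑_i (z_i ln(z_i/z'_i) − z_i + z'_i) ≥ (1/2) ∑_i (z_i − z'_i)²`.  In particular
`Ψ^van` is 1-strongly convex w.r.t. the 2-norm on any treeplex. -/
theorem klgen_strongly_convex {P : ℕ} (z z' : Fin P → ℝ)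
    (hz : ∀ i, 0 ≤ z i ∧ z i ≤ 1) (hz' : ∀ i, 0 < z' i ∧ z' i ≤ 1) :
    (1 / 2) * (∑ i, (z i - z' i) ^ 2) ≤
      ∑ i, (z i * Real.log (z i / z' i) - z i + z' i) := by
  rw [mul_sum]
  gcongr with i
  have h := sq_sub_div_le_mul_log_div_sub_add (hz i).1 (hz' i).1 (hz i).2 (hz' i).2
  linarith
end

section
/- (Reverse Pinsker-type bound for the vanilla entropy on a treeplex.) Let Z ⊆ ℝ^P be a treeplex, let z* ∈ Z, and let z ∈ Z have all coordinates strictly positive. Write S = supp(z*) (which is nonempty). Then the generalized KL divergence satisfies D_{Ψ^van}(z*, z) ≤ Σ_{i∈S} (z*_i − z_i)² / (min_{j∈S} z_j) + Σ_{i∉S} z_i ≤ 3P ‖z* − z‖₂ / (min_{j∈S} z_j). -/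
open Finset Filter Topology

noncomputable section

/-! A coordinate of the vanilla Bregman divergence is `x ln(x/y) − x + y`. On the support of `z*`
the bound `ln t ≤ t − 1` turns it into `(x − y)²/y ≤ (x − y)²/min_S z`, and off the support it is
just `z_i`. Since the coordinates of treeplex points lie in `[0,1]`, both `(z*_i − z_i)²` and
`z_i = |z*_i − z_i|` (off the support) are at most `|z*_i − z_i| ≤ ‖z* − z‖₂`, and `min_S z ≤ 1`. -/

namespace IsTreeplex

theorem mem_Icc {n : ℕ} {Z : Set (Fin n → ℝ)} (hZ : IsTreeplex Z) {z : Fin n → ℝ} (hz : z ∈ Z)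
    (i : Fin n) : z i ∈ Set.Icc 0 1 := by
  induction hZ with
  | simplex m =>
    obtain ⟨hnonneg, hsum⟩ := hz
    exact ⟨hnonneg i, hsum ▸ single_le_sum (fun j _ => hnonneg j) (mem_univ i)⟩
  | prod _ _ ihS ihT =>
    obtain ⟨u, hu, v, hv, rfl⟩ := hz
    induction i using Fin.addCases with
    | left i => simpa only [Fin.append_left] using ihS hu i
    | right j => simpa only [Fin.append_right] using ihT hv j
  | branch k _ _ ihS ihT =>
    obtain ⟨u, hu, v, hv, rfl⟩ := hz
    induction i using Fin.addCases with
    | left i => simpa only [Fin.append_left] using ihS hu i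
    | right j =>
      obtain ⟨huk₀, huk₁⟩ := ihS hu k
      obtain ⟨hvj₀, hvj₁⟩ := ihT hv j
      simp only [Fin.append_right]
      exact ⟨mul_nonneg huk₀ hvj₀, mul_le_one₀ huk₁ hvj₀ hvj₁⟩

theorem exists_pos {n : ℕ} {Z : Set (Fin n → ℝ)} (hZ : IsTreeplex Z) {z : Fin n → ℝ}
    (hz : z ∈ Z) : ∃ i, 0 < z i := by
  induction hZ with
  | simplex m =>
    obtain ⟨hnonneg, hsum⟩ := hz
    by_contra! hnonpos
    have hzero : ∀ i, z i = 0 := fun i => le_antisymm (hnonpos i) (hnonneg i)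
    simp [hzero] at hsum
  | prod _ _ ihS _ | branch _ _ _ ihS _ =>
    obtain ⟨u, hu, v, -, rfl⟩ := hz
    obtain ⟨i, hi⟩ := ihS hu
    exact ⟨Fin.castAdd _ i, by simpa only [Fin.append_left] using hi⟩

end IsTreeplex

theorem mul_log_div_sub_add_le_sq_div {x y : ℝ} (hx : 0 ≤ x) (hy : 0 < y) :
    x * Real.log (x / y) - x + y ≤ (x - y) ^ 2 / y := by
  obtain rfl | hx := hx.eq_or_lt
  · simp [sq, hy.ne']
  have hlog : x * Real.log (x / y) ≤ x * (x / y - 1) :=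
    mul_le_mul_of_nonneg_left (Real.log_le_sub_one_of_pos (div_pos hx hy)) hx.le
  have hsq : x * (x / y - 1) - x + y = (x - y) ^ 2 / y := by
    field_simp
    ring
  linarith

theorem KLgen_le_sum_sq_div_add_sum {n : ℕ} {u v : Fin n → ℝ} {m : ℝ} (hu : ∀ i, 0 ≤ u i)
    (hv : ∀ i, 0 < v i) (hm : 0 < m) (hmv : ∀ i, 0 < u i → m ≤ v i) :
    KLgen u v ≤ (∑ i ∈ univ.filter fun i => 0 < u i, (u i - v i) ^ 2) / m
      + ∑ i ∈ univ.filter fun i => ¬ 0 < u i, v i := by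
  rw [KLgen, ← sum_filter_add_sum_filter_not univ fun i => 0 < u i, sum_div]
  refine add_le_add (sum_le_sum fun i hi => ?_) (sum_congr rfl fun i hi => ?_).le
  · have hui : 0 < u i := (mem_filter.1 hi).2
    calc u i * Real.log (u i / v i) - u i + v i ≤ (u i - v i) ^ 2 / v i :=
          mul_log_div_sub_add_le_sq_div hui.le (hv i)
      _ ≤ (u i - v i) ^ 2 / m := div_le_div_of_nonneg_left (sq_nonneg _) hm (hmv i hui)
  · have hui : u i = 0 := le_antisymm (not_lt.1 (mem_filter.1 hi).2) (hu i)
    simp [hui]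

theorem abs_le_norm2 {n : ℕ} (w : Fin n → ℝ) (i : Fin n) : |w i| ≤ norm2 w :=
  Real.abs_le_sqrt (single_le_sum (f := fun j => w j ^ 2) (fun _ _ => sq_nonneg _) (mem_univ i))

theorem sum_le_mul_norm2 {n : ℕ} {s : Finset (Fin n)} {f w : Fin n → ℝ}
    (hf : ∀ i ∈ s, f i ≤ |w i|) : ∑ i ∈ s, f i ≤ n * norm2 w :=
  calc ∑ i ∈ s, f i ≤ s.card • norm2 w :=
        sum_le_card_nsmul _ _ _ fun i hi => (hf i hi).trans (abs_le_norm2 w i)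
    _ ≤ n * norm2 w := by
        rw [nsmul_eq_mul]
        gcongr
        · exact Real.sqrt_nonneg _
        · simpa using card_le_univ s

theorem sum_sq_div_add_sum_le_norm2 {n : ℕ} {u v : Fin n → ℝ} {m : ℝ}
    (hu : ∀ i, u i ∈ Set.Icc 0 1) (hv : ∀ i, v i ∈ Set.Icc 0 1) (hm₀ : 0 < m) (hm₁ : m ≤ 1) :
    (∑ i ∈ univ.filter fun i => 0 < u i, (u i - v i) ^ 2) / m
      + ∑ i ∈ univ.filter fun i => ¬ 0 < u i, v i ≤ 3 * n * norm2 (u - v) / m := by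
  have hsq : ∑ i ∈ univ.filter fun i => 0 < u i, (u i - v i) ^ 2 ≤ n * norm2 (u - v) := by
    refine sum_le_mul_norm2 fun i _ => ?_
    have hdist : |u i - v i| ≤ 1 :=
      abs_sub_le_of_nonneg_of_le (hu i).1 (hu i).2 (hv i).1 (hv i).2
    rw [← sq_abs]
    exact pow_le_of_le_one (abs_nonneg _) hdist two_ne_zero
  have hoff : ∑ i ∈ univ.filter fun i => ¬ 0 < u i, v i ≤ n * norm2 (u - v) := by
    refine sum_le_mul_norm2 fun i hi => ?_
    have hui : u i = 0 := le_antisymm (not_lt.1 (mem_filter.1 hi).2) (hu i).1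
    simp [hui, abs_of_nonneg (hv i).1]
  have hnorm : 0 ≤ n * norm2 (u - v) := mul_nonneg n.cast_nonneg (Real.sqrt_nonneg _)
  calc _ ≤ n * norm2 (u - v) / m + n * norm2 (u - v) / m :=
        add_le_add (div_le_div_of_nonneg_right hsq hm₀.le)
          (hoff.trans (le_div_self hnorm hm₀ hm₁))
    _ ≤ 3 * n * norm2 (u - v) / m := by
        rw [← add_div, mul_assoc]
        gcongr
        linarith

/-- Lemma 12: reverse-Pinsker-type bound for the vanilla entropy on
a treeplex.  For `z* ∈ Z` and `z ∈ Z` with all coordinates positive, the support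
`S = supp(z*)` is nonempty and
`D_{Ψ^van}(z*, z) ≤ ∑_{i∈S}(z*_i − z_i)²/(min_{j∈S} z_j) + ∑_{i∉S} z_i
  ≤ 3P‖z* − z‖₂/(min_{j∈S} z_j)`. -/
theorem reverse_pinsker_vanilla_entropy {P : ℕ}
    (Z : Set (Fin P → ℝ)) (hZ : IsTreeplex Z)
    (zs : Fin P → ℝ) (hzs : zs ∈ Z)
    (z : Fin P → ℝ) (hz : z ∈ Z) (hzpos : ∀ i, 0 < z i) :
    (Finset.univ.filter fun i => 0 < zs i).Nonempty ∧
    KLgen zs z ≤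
      (∑ i ∈ Finset.univ.filter fun i => 0 < zs i, (zs i - z i) ^ 2) /
          sInf (z '' {j | 0 < zs j})
        + (∑ i ∈ Finset.univ.filter fun i => ¬ 0 < zs i, z i) ∧
    (∑ i ∈ Finset.univ.filter fun i => 0 < zs i, (zs i - z i) ^ 2) /
          sInf (z '' {j | 0 < zs j})
        + (∑ i ∈ Finset.univ.filter fun i => ¬ 0 < zs i, z i) ≤
      3 * (P : ℝ) * norm2 (zs - z) / sInf (z '' {j | 0 < zs j}) := by
  obtain ⟨i₀, hi₀⟩ := hZ.exists_pos hzs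
  set m := sInf (z '' {j | 0 < zs j})
  obtain ⟨j₀, -, hj₀⟩ : m ∈ z '' {j | 0 < zs j} :=
    (Set.Nonempty.image z ⟨i₀, hi₀⟩).csInf_mem (Set.toFinite _)
  have hm_le : ∀ j, 0 < zs j → m ≤ z j := fun j hj =>
    csInf_le (Set.toFinite _).bddBelow ⟨j, hj, rfl⟩
  have hm_pos : 0 < m := hj₀ ▸ hzpos j₀
  have hm_le_one : m ≤ 1 := hj₀ ▸ (hZ.mem_Icc hz j₀).2
  exact ⟨⟨i₀, by simpa using hi₀⟩,
    KLgen_le_sum_sq_div_add_sum (fun i => (hZ.mem_Icc hzs i).1) hzpos hm_pos hm_le,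
    sum_sq_div_add_sum_le_norm2 (hZ.mem_Icc hzs) (hZ.mem_Icc hz) hm_pos hm_le_one⟩
end
end
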